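/- arXiv:2206.07965 — 2 statements merged into one kernel-verified Lean document; each statement's English description precedes it below -/
import Mathlib

section
/- Let δ ≥ 0, σ ≥ 1, s ∈ ℝ and l > 0. Then for every u : ℝ → ℂ with ‖u‖_{G^{δ}_{σ,s+l/(2σ)}} < ∞ one has the interpolation estimate ‖u‖_{G^{δ}_{σ,s}} ≤ √e ‖u‖_{H^s} + (2δ)^{l/2} ‖u‖_{G^{δ}_{σ,s+l/(2σ)}}. -/
open MeasureTheory Filter

/-- The Fourier transform with the convention `f̂(ξ) = ∫ e^{-i x ξ} f(x) dx`. -/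
noncomputable def FT (f : ℝ → ℂ) (ξ : ℝ) : ℂ :=
  ∫ x : ℝ, Complex.exp (-Complex.I * (ξ : ℂ) * (x : ℂ)) * f x

/-- The inverse Fourier transform for the above convention. -/
noncomputable def FTinv (g : ℝ → ℂ) (x : ℝ) : ℂ :=
  (1 / (2 * Real.pi) : ℂ) * ∫ ξ : ℝ, Complex.exp (Complex.I * (ξ : ℂ) * (x : ℂ)) * g ξ

/-- The Fourier multiplier operator with symbol `m`. -/
noncomputable def fourierMult (m : ℝ → ℂ) (f : ℝ → ℂ) : ℝ → ℂ :=
  FTinv fun ξ => m ξ * FT f ξ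

/-- The weight defining the Gevrey norm `G^δ_{σ,s}`. -/
noncomputable def gevreyWeight (σ δ s : ℝ) (ξ : ℝ) : ℝ :=
  (1 + ξ ^ 2) ^ s * Real.exp (2 * δ * (1 + ξ ^ 2) ^ (1 / (2 * σ)))

/-- The Gevrey norm `‖f‖_{G^δ_{σ,s}}`. -/
noncomputable def gevreyNorm (σ δ s : ℝ) (f : ℝ → ℂ) : ℝ :=
  Real.sqrt (∫ ξ : ℝ, gevreyWeight σ δ s ξ * ‖FT f ξ‖ ^ 2)

/-- Membership in the Gevrey space `G^δ_{σ,s}(ℝ)`: the Gevrey norm is finite. -/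
def MemGevrey (σ δ s : ℝ) (f : ℝ → ℂ) : Prop :=
  Integrable (fun ξ : ℝ => gevreyWeight σ δ s ξ * ‖FT f ξ‖ ^ 2)

/-- The Sobolev `H^s` norm. -/
noncomputable def sobolevNorm (s : ℝ) (f : ℝ → ℂ) : ℝ :=
  Real.sqrt (∫ ξ : ℝ, (1 + ξ ^ 2) ^ s * ‖FT f ξ‖ ^ 2)

/-- Membership in `H^s(ℝ)`. -/
def MemHs (s : ℝ) (f : ℝ → ℂ) : Prop :=
  Integrable (fun ξ : ℝ => (1 + ξ ^ 2) ^ s * ‖FT f ξ‖ ^ 2)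

lemma gevreyWeight_pos (σ δ s ξ : ℝ) : 0 < gevreyWeight σ δ s ξ := by
  unfold gevreyWeight
  have h : (0:ℝ) < 1 + ξ ^ 2 := by positivity
  positivity

lemma gevreyWeight_continuous (σ δ s : ℝ) : Continuous (gevreyWeight σ δ s) := by
  unfold gevreyWeight
  have h1 : Continuous fun ξ : ℝ => (1:ℝ) + ξ ^ 2 := by continuity
  have hne : ∀ ξ : ℝ, (1 : ℝ) + ξ ^ 2 ≠ 0 := fun ξ => by positivity
  exact (h1.rpow_const fun ξ => Or.inl (hne ξ)).mul
    (Real.continuous_exp.comp (continuous_const.mul (h1.rpow_const fun ξ => Or.inl (hne ξ))))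

lemma sqrt_add_le_aux (a b : ℝ) (ha : 0 ≤ a) (hb : 0 ≤ b) :
    Real.sqrt (a + b) ≤ Real.sqrt a + Real.sqrt b := by
  have h : a + b ≤ (Real.sqrt a + Real.sqrt b) ^ 2 := by
    rw [add_sq, Real.sq_sqrt ha, Real.sq_sqrt hb]
    nlinarith [Real.sqrt_nonneg a, Real.sqrt_nonneg b]
  calc Real.sqrt (a + b) ≤ Real.sqrt ((Real.sqrt a + Real.sqrt b) ^ 2) := Real.sqrt_le_sqrt h
    _ = _ := Real.sqrt_sq (by positivity)

lemma weight_bound (σ δ s l : ℝ) (hσ : 1 ≤ σ) (hδ : 0 ≤ δ) (hl : 0 < l) (ξ : ℝ) :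
    gevreyWeight σ δ s ξ ≤ Real.exp 1 * (1 + ξ ^ 2) ^ s
      + (2 * δ) ^ l * gevreyWeight σ δ (s + l / (2 * σ)) ξ := by
  have hb : (1:ℝ) ≤ 1 + ξ ^ 2 := by nlinarith [sq_nonneg ξ]
  have hbp : (0:ℝ) < 1 + ξ ^ 2 := by positivity
  have hσ0 : (0:ℝ) < σ := lt_of_lt_of_le one_pos hσ
  set A := (1 + ξ ^ 2) ^ (1 / (2 * σ)) with hA
  have hA1 : (1:ℝ) ≤ A := Real.one_le_rpow hb (by positivity)
  have hApos : (0:ℝ) < A := lt_of_lt_of_le one_pos hA1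
  have hwpos := gevreyWeight_pos σ δ (s + l / (2 * σ)) ξ
  unfold gevreyWeight
  rcases le_or_gt (2 * δ * A) 1 with h | h
  · have he : Real.exp (2 * δ * A) ≤ Real.exp 1 := Real.exp_le_exp.2 h
    have h2 : (1 + ξ ^ 2) ^ s * Real.exp (2 * δ * A) ≤ Real.exp 1 * (1 + ξ ^ 2) ^ s := by
      rw [mul_comm (Real.exp 1)]
      exact mul_le_mul_of_nonneg_left he (Real.rpow_nonneg hbp.le s)
    refine h2.trans (le_add_of_nonneg_right ?_)
    have := Real.rpow_nonneg (show (0:ℝ) ≤ 2 * δ by positivity) l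
    unfold gevreyWeight at hwpos
    positivity
  · have h1 : (1:ℝ) ≤ (2 * δ * A) ^ l := Real.one_le_rpow h.le hl.le
    have hexpand : (2 * δ) ^ l * ((1 + ξ ^ 2) ^ (s + l / (2 * σ)) *
        Real.exp (2 * δ * A)) =
        (2 * δ * A) ^ l * ((1 + ξ ^ 2) ^ s * Real.exp (2 * δ * A)) := by
      have hAl : A ^ l = (1 + ξ ^ 2) ^ (l / (2 * σ)) := by
        rw [hA, ← Real.rpow_mul hbp.le]
        ring_nf
      rw [Real.mul_rpow (by positivity) hApos.le, Real.rpow_add hbp, hAl]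
      ring
    have hkey : (1 + ξ ^ 2) ^ s * Real.exp (2 * δ * A) ≤
        (2 * δ * A) ^ l * ((1 + ξ ^ 2) ^ s * Real.exp (2 * δ * A)) := by
      nth_rewrite 1 [← one_mul ((1 + ξ ^ 2) ^ s * Real.exp (2 * δ * A))]
      exact mul_le_mul_of_nonneg_right h1 (by positivity)
    rw [hexpand]
    refine hkey.trans (le_add_of_nonneg_left ?_)
    positivity


/-- The interpolation estimate
`‖u‖_{G^δ_{σ,s}} ≤ √e ‖u‖_{H^s} + (2δ)^{l/2} ‖u‖_{G^δ_{σ,s+l/(2σ)}}`. -/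
theorem gevrey_interpolation (σ δ s l : ℝ) (hσ : 1 ≤ σ) (hδ : 0 ≤ δ) (hl : 0 < l)
    (u : ℝ → ℂ) (hu : MemGevrey σ δ (s + l / (2 * σ)) u) :
    gevreyNorm σ δ s u ≤
      Real.sqrt (Real.exp 1) * sobolevNorm s u +
        (2 * δ) ^ (l / 2) * gevreyNorm σ δ (s + l / (2 * σ)) u := by
  have hσ0 : (0:ℝ) < σ := lt_of_lt_of_le one_pos hσ
  set s' := s + l / (2 * σ) with hs'
  have hb : ∀ ξ : ℝ, (1:ℝ) ≤ 1 + ξ ^ 2 := fun ξ => by nlinarith [sq_nonneg ξ]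
  have hbp : ∀ ξ : ℝ, (0:ℝ) < 1 + ξ ^ 2 := fun ξ => by positivity
  -- measurability of ‖FT u‖²
  have hm : AEStronglyMeasurable (fun ξ : ℝ => ‖FT u ξ‖ ^ 2) volume := by
    have h1 := hu.aestronglyMeasurable
    have h2 : Continuous fun ξ : ℝ => (gevreyWeight σ δ s' ξ)⁻¹ :=
      (gevreyWeight_continuous σ δ s').inv₀ fun ξ => (gevreyWeight_pos σ δ s' ξ).ne'
    refine (h2.aestronglyMeasurable.mul h1).congr (Filter.Eventually.of_forall fun ξ => ?_)
    simp only [Pi.mul_apply]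
    rw [inv_mul_cancel_left₀ (gevreyWeight_pos σ δ s' ξ).ne']
  -- pointwise: (1+ξ²)^s ≤ gevreyWeight σ δ s'
  have hsw : ∀ ξ : ℝ, (1 + ξ ^ 2) ^ s ≤ gevreyWeight σ δ s' ξ := by
    intro ξ
    unfold gevreyWeight
    have h1 : (1 + ξ ^ 2) ^ s ≤ (1 + ξ ^ 2) ^ s' :=
      Real.rpow_le_rpow_of_exponent_le (hb ξ) (by rw [hs']; nlinarith [div_pos hl (by positivity : (0:ℝ) < 2 * σ)])
    refine h1.trans ?_
    exact le_mul_of_one_le_right (Real.rpow_nonneg (hbp ξ).le s') (Real.one_le_exp (by positivity))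
  -- integrability of the Sobolev integrand
  have hS : MemHs s u := by
    refine hu.mono' (((continuous_const.add (continuous_pow 2)).rpow_const
      (fun ξ => Or.inl (hbp ξ).ne')).aestronglyMeasurable.mul hm)
      (Filter.Eventually.of_forall fun ξ => ?_)
    rw [Real.norm_eq_abs, abs_of_nonneg (by positivity)]
    exact mul_le_mul_of_nonneg_right (hsw ξ) (by positivity)
  -- integrability of the G^δ_{σ,s} integrand
  have hG : MemGevrey σ δ s u := by
    refine (hu.const_mul (Real.exp 1 + (2 * δ) ^ l)).mono'
      ((gevreyWeight_continuous σ δ s).aestronglyMeasurable.mul hm)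
      (Filter.Eventually.of_forall fun ξ => ?_)
    rw [Real.norm_eq_abs, abs_of_nonneg (mul_nonneg (gevreyWeight_pos σ δ s ξ).le (by positivity))]
    have h1 := weight_bound σ δ s l hσ hδ hl ξ
    rw [← hs'] at h1
    have h2 := hsw ξ
    have h3 : (0:ℝ) ≤ ‖FT u ξ‖ ^ 2 := by positivity
    have h4 : (0:ℝ) ≤ (2 * δ) ^ l := Real.rpow_nonneg (by positivity) l
    have hA : gevreyWeight σ δ s ξ ≤ (Real.exp 1 + (2 * δ) ^ l) * gevreyWeight σ δ s' ξ := by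
      nlinarith [mul_le_mul_of_nonneg_left h2 (Real.exp_pos 1).le]
    calc gevreyWeight σ δ s ξ * ‖FT u ξ‖ ^ 2
        ≤ ((Real.exp 1 + (2 * δ) ^ l) * gevreyWeight σ δ s' ξ) * ‖FT u ξ‖ ^ 2 :=
          mul_le_mul_of_nonneg_right hA h3
      _ = (Real.exp 1 + (2 * δ) ^ l) * (gevreyWeight σ δ s' ξ * ‖FT u ξ‖ ^ 2) :=
          mul_assoc _ _ _
  -- the integral estimate
  set X := ∫ ξ : ℝ, (1 + ξ ^ 2) ^ s * ‖FT u ξ‖ ^ 2 with hX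
  set Y := ∫ ξ : ℝ, gevreyWeight σ δ s' ξ * ‖FT u ξ‖ ^ 2 with hY
  have hXnn : 0 ≤ X := integral_nonneg fun ξ => by positivity
  have hYnn : 0 ≤ Y := integral_nonneg fun ξ => mul_nonneg (gevreyWeight_pos σ δ s' ξ).le (by positivity)
  have hint : (∫ ξ : ℝ, gevreyWeight σ δ s ξ * ‖FT u ξ‖ ^ 2) ≤
      Real.exp 1 * X + (2 * δ) ^ l * Y := by
    rw [hX, hY, ← integral_const_mul, ← integral_const_mul,
      ← integral_add (hS.const_mul _) (hu.const_mul _)]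
    refine integral_mono hG ((hS.const_mul _).add (hu.const_mul _)) fun ξ => ?_
    have h1 := weight_bound σ δ s l hσ hδ hl ξ
    rw [← hs'] at h1
    have h3 : (0:ℝ) ≤ ‖FT u ξ‖ ^ 2 := by positivity
    have := mul_le_mul_of_nonneg_right h1 h3
    simp only [Pi.add_apply]
    nlinarith [this]
  have hfin : Real.sqrt (Real.exp 1 * X + (2 * δ) ^ l * Y) ≤
      Real.sqrt (Real.exp 1) * Real.sqrt X + (2 * δ) ^ (l / 2) * Real.sqrt Y := by
    have h4 : (0:ℝ) ≤ (2 * δ) ^ l := Real.rpow_nonneg (by positivity) l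
    refine (sqrt_add_le_aux _ _ (by positivity) (mul_nonneg h4 hYnn)).trans_eq ?_
    rw [Real.sqrt_mul (Real.exp_pos 1).le, Real.sqrt_mul h4,
      show Real.sqrt ((2 * δ) ^ l) = (2 * δ) ^ (l / 2) from ?_]
    rw [Real.sqrt_eq_rpow, ← Real.rpow_mul (by positivity : (0:ℝ) ≤ 2 * δ)]
    ring_nf
  calc gevreyNorm σ δ s u ≤ Real.sqrt (Real.exp 1 * X + (2 * δ) ^ l * Y) :=
        Real.sqrt_le_sqrt hint
    _ ≤ _ := hfin.trans_eq (by rw [gevreyNorm, sobolevNorm, ← hX, ← hY])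
end

section
/- Let σ ≥ 1 and s > 1. Then there exists a constant C_s > 0, depending only on s, such that for all δ ≥ 0 and all ξ, η ∈ ℝ: |(1+ξ²)^{s/2} e^{δ(1+ξ²)^{1/(2σ)}} − (1+η²)^{s/2} e^{δ(1+η²)^{1/(2σ)}}| ≤ C_s |ξ−η| [ (1+|ξ−η|²)^{(s−1)/2} + (1+|η|²)^{(s−1)/2} + δ( (1+|ξ−η|²)^{(s−1)/2 + 1/(2σ)} + (1+|η|²)^{(s−1)/2 + 1/(2σ)} ) ] · e^{δ(1+|ξ−η|²)^{1/(2σ)}} e^{δ(1+|η|²)^{1/(2σ)}}. -/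
open Real Set

private lemma rpow_add_le_add_rpow_real {x y p : ℝ} (hx : 0 ≤ x) (hy : 0 ≤ y)
    (hp : 0 ≤ p) (hp1 : p ≤ 1) : (x + y) ^ p ≤ x ^ p + y ^ p := by
  have h := NNReal.rpow_add_le_add_rpow x.toNNReal y.toNNReal hp hp1
  have h' := NNReal.coe_le_coe.mpr h
  push_cast at h'
  rwa [Real.coe_toNNReal x hx, Real.coe_toNNReal y hy] at h'

private lemma sqrt_one_add_sq_add {a b : ℝ} (ha : 0 ≤ a) (hb : 0 ≤ b) :
    Real.sqrt (1 + (a + b) ^ 2) ≤ Real.sqrt (1 + a ^ 2) + Real.sqrt (1 + b ^ 2) := by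
  have h1 : Real.sqrt (1 + a ^ 2) ^ 2 = 1 + a ^ 2 := Real.sq_sqrt (by positivity)
  have h2 : Real.sqrt (1 + b ^ 2) ^ 2 = 1 + b ^ 2 := Real.sq_sqrt (by positivity)
  have h3 : a ≤ Real.sqrt (1 + a ^ 2) := by
    rw [Real.le_sqrt ha (by positivity)]; nlinarith
  have h4 : b ≤ Real.sqrt (1 + b ^ 2) := by
    rw [Real.le_sqrt hb (by positivity)]; nlinarith
  rw [Real.sqrt_le_iff]
  refine ⟨by positivity, ?_⟩
  nlinarith [mul_nonneg (Real.sqrt_nonneg (1+a^2)) (Real.sqrt_nonneg (1+b^2)),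
    mul_le_mul h4 h3 ha (Real.sqrt_nonneg (1+b^2))]

set_option maxHeartbeats 1000000 in
/-- Pointwise Lipschitz-type estimate on the Fourier weights used to define Gevrey norms. -/
theorem gevrey_weight_difference_estimate (σ s : ℝ) (hσ : 1 ≤ σ) (hs : 1 < s) :
    ∃ C > (0 : ℝ), ∀ δ ξ η : ℝ, 0 ≤ δ →
      |(1 + ξ ^ 2) ^ (s / 2) * Real.exp (δ * (1 + ξ ^ 2) ^ (1 / (2 * σ))) -
          (1 + η ^ 2) ^ (s / 2) * Real.exp (δ * (1 + η ^ 2) ^ (1 / (2 * σ)))| ≤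
        C * |ξ - η| *
          ((1 + |ξ - η| ^ 2) ^ ((s - 1) / 2) + (1 + |η| ^ 2) ^ ((s - 1) / 2) +
            δ * ((1 + |ξ - η| ^ 2) ^ ((s - 1) / 2 + 1 / (2 * σ)) +
              (1 + |η| ^ 2) ^ ((s - 1) / 2 + 1 / (2 * σ)))) *
          Real.exp (δ * (1 + |ξ - η| ^ 2) ^ (1 / (2 * σ))) *
          Real.exp (δ * (1 + |η| ^ 2) ^ (1 / (2 * σ))) := by
  have hσ0 : (0:ℝ) < σ := by linarith
  refine ⟨s * 4 ^ (s / 2), by positivity, ?_⟩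
  intro δ ξ η hδ
  set κ : ℝ := 1 / (2 * σ) with hκdef
  have hκ0 : 0 < κ := by positivity
  have hκhalf : κ ≤ 1 / 2 := by
    rw [hκdef, div_le_div_iff₀ (by positivity) (by norm_num)]
    linarith
  set C : ℝ := s * 4 ^ (s / 2) with hCdef
  set A : ℝ := 1 + |ξ - η| ^ 2 with hAdef
  set B : ℝ := 1 + |η| ^ 2 with hBdef
  set α : ℝ := (s - 1) / 2 with hαdef
  set β : ℝ := α + κ with hβdef
  have hA1 : (1:ℝ) ≤ A := by simp [hAdef]; positivity
  have hB1 : (1:ℝ) ≤ B := by simp [hBdef]; positivity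
  have hA0 : (0:ℝ) < A := by linarith
  have hB0 : (0:ℝ) < B := by linarith
  have hα0 : 0 ≤ α := by rw [hαdef]; linarith
  have hβ0 : 0 ≤ β := by rw [hβdef]; positivity
  have hαs : α ≤ s / 2 := by rw [hαdef]; linarith
  have hβs : β ≤ s / 2 := by rw [hβdef, hαdef]; linarith
  set E : ℝ := Real.exp (δ * A ^ κ) * Real.exp (δ * B ^ κ) with hEdef
  set Sm : ℝ := A ^ α + B ^ α + δ * (A ^ β + B ^ β) with hSmdef
  set f' : ℝ → ℝ := fun t =>
      2 * t * (s / 2) * (1 + t ^ 2) ^ (s / 2 - 1) * Real.exp (δ * (1 + t ^ 2) ^ κ) +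
      (1 + t ^ 2) ^ (s / 2) *
        (Real.exp (δ * (1 + t ^ 2) ^ κ) * (δ * (2 * t * κ * (1 + t ^ 2) ^ (κ - 1)))) with hf'def
  -- bound on powers of u on the segment
  have hpow : ∀ u : ℝ, 0 < u → u ≤ 2 * A + 2 * B → ∀ p : ℝ, 0 ≤ p → p ≤ s / 2 →
      u ^ p ≤ 4 ^ (s / 2) * (A ^ p + B ^ p) := by
    intro u hu0 hule p hp hps
    have hmono : (4:ℝ) ^ p ≤ 4 ^ (s / 2) := Real.rpow_le_rpow_of_exponent_le (by norm_num) hps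
    have h4 : u ≤ 4 * A ∨ u ≤ 4 * B := by
      rcases le_total A B with h | h
      · right; linarith
      · left; linarith
    have hApn : 0 ≤ A ^ p := Real.rpow_nonneg hA0.le p
    have hBpn : 0 ≤ B ^ p := Real.rpow_nonneg hB0.le p
    rcases h4 with h | h
    · calc u ^ p ≤ (4 * A) ^ p := Real.rpow_le_rpow hu0.le h hp
        _ = 4 ^ p * A ^ p := Real.mul_rpow (by norm_num) hA0.le
        _ ≤ 4 ^ (s / 2) * (A ^ p + B ^ p) := by
            apply mul_le_mul hmono (by linarith) hApn (by positivity)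
    · calc u ^ p ≤ (4 * B) ^ p := Real.rpow_le_rpow hu0.le h hp
        _ = 4 ^ p * B ^ p := Real.mul_rpow (by norm_num) hB0.le
        _ ≤ 4 ^ (s / 2) * (A ^ p + B ^ p) := by
            apply mul_le_mul hmono (by linarith) hBpn (by positivity)
  have key : |(1 + ξ ^ 2) ^ (s / 2) * Real.exp (δ * (1 + ξ ^ 2) ^ κ) -
      (1 + η ^ 2) ^ (s / 2) * Real.exp (δ * (1 + η ^ 2) ^ κ)| ≤ C * Sm * E * |ξ - η| := by
    have hderiv : ∀ x ∈ segment ℝ η ξ,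
        HasDerivWithinAt (fun t => (1 + t ^ 2) ^ (s / 2) * Real.exp (δ * (1 + t ^ 2) ^ κ))
          (f' x) (segment ℝ η ξ) x := by
      intro x hx
      have hu0 : (1 + x ^ 2) ≠ 0 := by positivity
      have hux : HasDerivAt (fun t : ℝ => 1 + t ^ 2) (2 * x) x := by
        simpa using (hasDerivAt_pow 2 x).const_add 1
      have h1 : HasDerivAt (fun t : ℝ => (1 + t ^ 2) ^ (s / 2))
          (2 * x * (s / 2) * (1 + x ^ 2) ^ (s / 2 - 1)) x := hux.rpow_const (Or.inl hu0)
      have h2 : HasDerivAt (fun t : ℝ => (1 + t ^ 2) ^ κ)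
          (2 * x * κ * (1 + x ^ 2) ^ (κ - 1)) x := hux.rpow_const (Or.inl hu0)
      have h3 : HasDerivAt (fun t : ℝ => Real.exp (δ * (1 + t ^ 2) ^ κ))
          (Real.exp (δ * (1 + x ^ 2) ^ κ) * (δ * (2 * x * κ * (1 + x ^ 2) ^ (κ - 1)))) x :=
        (h2.const_mul δ).exp
      exact (h1.mul h3).hasDerivWithinAt
    have hbound : ∀ x ∈ segment ℝ η ξ, ‖f' x‖ ≤ C * Sm * E := by
      intro x hx
      have habs : |x| ≤ |η| + |ξ - η| := by
        have hξ : |ξ| ≤ |η| + |ξ - η| := by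
          have h := abs_sub_abs_le_abs_sub ξ η; linarith
        have hη : |η| ≤ |η| + |ξ - η| := by linarith [abs_nonneg (ξ - η)]
        rcases le_total η ξ with h | h
        · rw [segment_eq_Icc h] at hx
          exact (abs_le_max_abs_abs hx.1 hx.2).trans (max_le hη hξ)
        · rw [segment_symm, segment_eq_Icc h] at hx
          exact (abs_le_max_abs_abs hx.1 hx.2).trans (max_le hξ hη)
      set u : ℝ := 1 + x ^ 2 with hudef
      have hu0 : (0:ℝ) < u := by positivity
      have hxsq : x ^ 2 ≤ (|η| + |ξ - η|) ^ 2 := by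
        have h1 : x ^ 2 = |x| ^ 2 := (sq_abs x).symm
        rw [h1]
        exact pow_le_pow_left₀ (abs_nonneg x) habs 2
      have hule : u ≤ 2 * A + 2 * B := by
        rw [hudef, hAdef, hBdef]
        nlinarith [hxsq, sq_nonneg (|η| - |ξ - η|), abs_nonneg η, abs_nonneg (ξ - η)]
      have hsqrtu : Real.sqrt u ≤ Real.sqrt A + Real.sqrt B := by
        calc Real.sqrt u ≤ Real.sqrt (1 + (|η| + |ξ - η|) ^ 2) :=
              Real.sqrt_le_sqrt (by rw [hudef]; exact add_le_add_right hxsq 1)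
          _ ≤ Real.sqrt (1 + |η| ^ 2) + Real.sqrt (1 + |ξ - η| ^ 2) :=
              sqrt_one_add_sq_add (abs_nonneg η) (abs_nonneg (ξ - η))
          _ = Real.sqrt A + Real.sqrt B := by rw [hAdef, hBdef]; ring
      -- exponential bound
      have hexp : Real.exp (δ * u ^ κ) ≤ E := by
        have huκ : u ^ κ ≤ A ^ κ + B ^ κ := by
          have h1 : u ≤ (Real.sqrt A + Real.sqrt B) ^ 2 := by
            have := Real.sq_sqrt hu0.le
            nlinarith [Real.sqrt_nonneg u, Real.sqrt_nonneg A, Real.sqrt_nonneg B]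
          have h2 : u ^ κ ≤ ((Real.sqrt A + Real.sqrt B) ^ 2) ^ κ :=
            Real.rpow_le_rpow hu0.le h1 hκ0.le
          have h3 : ((Real.sqrt A + Real.sqrt B) ^ 2) ^ κ
              = (Real.sqrt A + Real.sqrt B) ^ (2 * κ) := by
            rw [← Real.rpow_natCast (Real.sqrt A + Real.sqrt B) 2, ← Real.rpow_mul (by positivity)]
            norm_num
          have h4 : (Real.sqrt A + Real.sqrt B) ^ (2 * κ)
              ≤ Real.sqrt A ^ (2 * κ) + Real.sqrt B ^ (2 * κ) :=
            rpow_add_le_add_rpow_real (Real.sqrt_nonneg A) (Real.sqrt_nonneg B)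
              (by positivity) (by linarith)
          have h5 : Real.sqrt A ^ (2 * κ) = A ^ κ := by
            rw [Real.sqrt_eq_rpow, ← Real.rpow_mul hA0.le,
              show (1/2 : ℝ) * (2*κ) = κ by ring]
          have h6 : Real.sqrt B ^ (2 * κ) = B ^ κ := by
            rw [Real.sqrt_eq_rpow, ← Real.rpow_mul hB0.le,
              show (1/2 : ℝ) * (2*κ) = κ by ring]
          calc u ^ κ ≤ (Real.sqrt A + Real.sqrt B) ^ (2 * κ) := h3 ▸ h2
            _ ≤ A ^ κ + B ^ κ := by rw [← h5, ← h6]; exact h4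
        rw [hEdef, ← Real.exp_add]
        apply Real.exp_le_exp.mpr
        calc δ * u ^ κ ≤ δ * (A ^ κ + B ^ κ) := by
              apply mul_le_mul_of_nonneg_left huκ hδ
          _ = δ * A ^ κ + δ * B ^ κ := by ring
      have hexp0 : 0 < Real.exp (δ * u ^ κ) := Real.exp_pos _
      have habsu : |x| ≤ u ^ (1/2 : ℝ) := by
        rw [← Real.sqrt_eq_rpow]
        exact Real.abs_le_sqrt (by rw [hudef]; linarith)
      -- bound first term
      have ht1 : |2 * x * (s / 2) * u ^ (s / 2 - 1) * Real.exp (δ * u ^ κ)|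
          ≤ s * (4 ^ (s / 2) * (A ^ α + B ^ α)) * E := by
        have hxu : |x| * u ^ (s / 2 - 1) ≤ u ^ α := by
          calc |x| * u ^ (s / 2 - 1) ≤ u ^ (1/2 : ℝ) * u ^ (s / 2 - 1) := by
                apply mul_le_mul_of_nonneg_right habsu (Real.rpow_nonneg hu0.le _)
            _ = u ^ α := by
                rw [← Real.rpow_add hu0, hαdef]; ring_nf
        have hup : u ^ α ≤ 4 ^ (s / 2) * (A ^ α + B ^ α) := hpow u hu0 hule α hα0 hαs
        have h0 : |2 * x * (s / 2) * u ^ (s / 2 - 1) * Real.exp (δ * u ^ κ)|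
            = s * (|x| * u ^ (s / 2 - 1)) * Real.exp (δ * u ^ κ) := by
          rw [abs_mul, abs_mul, abs_mul, abs_of_nonneg (Real.rpow_nonneg hu0.le _),
            abs_of_nonneg hexp0.le, abs_mul, abs_of_nonneg (show (0:ℝ) ≤ s/2 by linarith)]
          simp [abs_mul]
          ring
        rw [h0]
        have hE0 : 0 < E := by rw [hEdef]; positivity
        calc s * (|x| * u ^ (s / 2 - 1)) * Real.exp (δ * u ^ κ)
            ≤ s * (4 ^ (s / 2) * (A ^ α + B ^ α)) * Real.exp (δ * u ^ κ) := by
              apply mul_le_mul_of_nonneg_right _ hexp0.le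
              apply mul_le_mul_of_nonneg_left (hxu.trans hup) (by linarith)
          _ ≤ s * (4 ^ (s / 2) * (A ^ α + B ^ α)) * E := by
              apply mul_le_mul_of_nonneg_left hexp _
              have := Real.rpow_nonneg hA0.le α
              have := Real.rpow_nonneg hB0.le α
              positivity
      -- bound second term
      have ht2 : |u ^ (s / 2) * (Real.exp (δ * u ^ κ) * (δ * (2 * x * κ * u ^ (κ - 1))))|
          ≤ δ * (4 ^ (s / 2) * (A ^ β + B ^ β)) * E := by
        have h2κ : 2 * κ ≤ 1 := by linarith
        have hxu : u ^ (s / 2) * (|x| * u ^ (κ - 1)) ≤ u ^ β := by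
          calc u ^ (s / 2) * (|x| * u ^ (κ - 1))
              ≤ u ^ (s / 2) * (u ^ (1/2 : ℝ) * u ^ (κ - 1)) := by
                apply mul_le_mul_of_nonneg_left _ (Real.rpow_nonneg hu0.le _)
                apply mul_le_mul_of_nonneg_right habsu (Real.rpow_nonneg hu0.le _)
            _ = u ^ β := by
                rw [← Real.rpow_add hu0, ← Real.rpow_add hu0, hβdef, hαdef]; ring_nf
        have hup : u ^ β ≤ 4 ^ (s / 2) * (A ^ β + B ^ β) := hpow u hu0 hule β hβ0 hβs
        have h0 : |u ^ (s / 2) * (Real.exp (δ * u ^ κ) * (δ * (2 * x * κ * u ^ (κ - 1))))|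
            = δ * (2 * κ) * (u ^ (s / 2) * (|x| * u ^ (κ - 1))) * Real.exp (δ * u ^ κ) := by
          rw [abs_mul, abs_mul, abs_mul, abs_mul, abs_mul, abs_mul,
            abs_of_nonneg (Real.rpow_nonneg hu0.le (s/2)),
            abs_of_nonneg (Real.rpow_nonneg hu0.le (κ-1)),
            abs_of_nonneg hexp0.le, abs_of_nonneg hδ, abs_of_nonneg hκ0.le,
            abs_of_nonneg (show (0:ℝ) ≤ 2 by norm_num)]
          ring
        rw [h0]
        have hE0 : 0 < E := by rw [hEdef]; positivity
        have hAβ : 0 ≤ A ^ β := Real.rpow_nonneg hA0.le β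
        have hBβ : 0 ≤ B ^ β := Real.rpow_nonneg hB0.le β
        calc δ * (2 * κ) * (u ^ (s / 2) * (|x| * u ^ (κ - 1))) * Real.exp (δ * u ^ κ)
            ≤ δ * 1 * (4 ^ (s / 2) * (A ^ β + B ^ β)) * Real.exp (δ * u ^ κ) := by
              apply mul_le_mul_of_nonneg_right _ hexp0.le
              apply mul_le_mul (by nlinarith) (hxu.trans hup) _ (by positivity)
              · have h1 : 0 ≤ u ^ (s/2 : ℝ) := Real.rpow_nonneg hu0.le _
                have h2 : 0 ≤ u ^ (κ - 1 : ℝ) := Real.rpow_nonneg hu0.le _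
                positivity
          _ ≤ δ * (4 ^ (s / 2) * (A ^ β + B ^ β)) * E := by
              rw [mul_one]
              apply mul_le_mul_of_nonneg_left hexp (by positivity)
      -- combine
      have hs4 : (1:ℝ) ≤ 4 ^ (s / 2) := by
        rw [show (1:ℝ) = 4 ^ (0:ℝ) by simp]
        exact Real.rpow_le_rpow_of_exponent_le (by norm_num) (by linarith)
      have hAα : 0 ≤ A ^ α := Real.rpow_nonneg hA0.le α
      have hBα : 0 ≤ B ^ α := Real.rpow_nonneg hB0.le α
      have hAβ : 0 ≤ A ^ β := Real.rpow_nonneg hA0.le β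
      have hBβ : 0 ≤ B ^ β := Real.rpow_nonneg hB0.le β
      have hE0 : 0 < E := by rw [hEdef]; positivity
      calc ‖f' x‖ = |2 * x * (s / 2) * u ^ (s / 2 - 1) * Real.exp (δ * u ^ κ) +
            u ^ (s / 2) * (Real.exp (δ * u ^ κ) * (δ * (2 * x * κ * u ^ (κ - 1))))| := by
              rw [Real.norm_eq_abs, hf'def]
        _ ≤ |2 * x * (s / 2) * u ^ (s / 2 - 1) * Real.exp (δ * u ^ κ)| +
            |u ^ (s / 2) * (Real.exp (δ * u ^ κ) * (δ * (2 * x * κ * u ^ (κ - 1))))| :=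
              abs_add_le _ _
        _ ≤ s * (4 ^ (s / 2) * (A ^ α + B ^ α)) * E +
            δ * (4 ^ (s / 2) * (A ^ β + B ^ β)) * E := add_le_add ht1 ht2
        _ ≤ C * Sm * E := by
            rw [hCdef, hSmdef]
            have h1 : δ * (4 ^ (s / 2) * (A ^ β + B ^ β)) ≤ s * 4 ^ (s / 2) * (δ * (A ^ β + B ^ β)) := by
              nlinarith [mul_nonneg (mul_nonneg (mul_nonneg (sub_nonneg.mpr hs.le) hδ)
                (Real.rpow_nonneg (show (0:ℝ) ≤ 4 by norm_num) (s/2))) (add_nonneg hAβ hBβ)]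
            nlinarith [hE0.le, Real.rpow_nonneg (show (0:ℝ) ≤ 4 by norm_num) (s/2)]
    have hmvt := Convex.norm_image_sub_le_of_norm_hasDerivWithin_le hderiv hbound
      (convex_segment η ξ) (left_mem_segment ℝ η ξ) (right_mem_segment ℝ η ξ)
    simpa [Real.norm_eq_abs] using hmvt
  calc |(1 + ξ ^ 2) ^ (s / 2) * Real.exp (δ * (1 + ξ ^ 2) ^ κ) -
      (1 + η ^ 2) ^ (s / 2) * Real.exp (δ * (1 + η ^ 2) ^ κ)| ≤ C * Sm * E * |ξ - η| := key
    _ = C * |ξ - η| * Sm * Real.exp (δ * A ^ κ) * Real.exp (δ * B ^ κ) := by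
        rw [hEdef]; ring
end
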